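/- arXiv:2506.09852 — 5 statements merged into one kernel-verified Lean document; each statement's English description precedes it below -/
import Mathlib

section
/- Decomposition of the restricted Dirichlet form along the last coordinate. Let n ≥ 1 and let A ⊆ {0,1}^n be a nonempty monotone set whose bottom slice A_0 is nonempty (hence A_1 ⊇ A_0 is nonempty). Then for every f : A → ℝ, 𝓔_A(f) = (a_1/(2a))·𝓔_{A_1}(f_1) + (a_0/(2a))·𝓔_{A_0}(f_0) + (a_0/(4a))·E_{x'∼A_0}[(f_0(x') − f_1(x'))²]. -/
/-- Expectation of `g` under the uniform measure on a finite subset `B` of the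
hypercube `{0,1}^m`: `E_{x∼B}[g] = (1/|B|)·∑_{x∈B} g(x)`. -/
noncomputable def cubeExpect {m : ℕ} (B : Finset (Fin m → Bool))
    (g : (Fin m → Bool) → ℝ) : ℝ :=
  (∑ x ∈ B, g x) / B.card

/-- Restricted Dirichlet form
`𝓔_B(g) = (1/4)·∑_{i=1}^m E_{x∼B}[(g(x) − g(x^{⊕i}))²·1{x^{⊕i} ∈ B}]`,
where `x^{⊕i}` flips the `i`-th coordinate of `x`. -/
noncomputable def cubeDirichlet {m : ℕ} (B : Finset (Fin m → Bool))
    (g : (Fin m → Bool) → ℝ) : ℝ :=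
  (1 / 4) * ∑ i : Fin m, cubeExpect B (fun x =>
    (g x - g (Function.update x i (!(x i)))) ^ 2 *
      (if Function.update x i (!(x i)) ∈ B then (1 : ℝ) else 0))

open Finset in
private lemma sum_snoc_split {m : ℕ} (A : Finset (Fin (m + 1) → Bool))
    (g : (Fin (m+1) → Bool) → ℝ) :
    ∑ x ∈ A, g x = ∑ x' ∈ univ.filter (fun x' => Fin.snoc x' false ∈ A), g (Fin.snoc x' false)
      + ∑ x' ∈ univ.filter (fun x' => Fin.snoc x' true ∈ A), g (Fin.snoc x' true) := by
  rw [← Finset.sum_filter_add_sum_filter_not A (fun x => x (Fin.last m) = true)]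
  rw [add_comm]
  congr 1
  · apply Finset.sum_nbij' (fun x => Fin.init x) (fun x' => Fin.snoc x' false)
    · intro x hx
      simp only [mem_filter, mem_univ, true_and]
      have hx' := Finset.mem_filter.1 hx
      have : Fin.snoc (Fin.init x) (x (Fin.last m)) = x := Fin.snoc_init_self x
      rw [show x (Fin.last m) = false by simpa using hx'.2] at this
      rw [this]; exact hx'.1
    · intro x' hx'
      simp only [mem_filter, mem_univ, true_and] at hx' ⊢
      exact ⟨hx', by simp⟩
    · intro x hx
      have hx' := Finset.mem_filter.1 hx
      have : Fin.snoc (Fin.init x) (x (Fin.last m)) = x := Fin.snoc_init_self x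
      rw [show x (Fin.last m) = false by simpa using hx'.2] at this
      exact this
    · intro x' _; exact Fin.init_snoc _ _
    · intro x hx
      have hx' := Finset.mem_filter.1 hx
      have : Fin.snoc (Fin.init x) (x (Fin.last m)) = x := Fin.snoc_init_self x
      rw [show x (Fin.last m) = false by simpa using hx'.2] at this
      rw [this]
  · apply Finset.sum_nbij' (fun x => Fin.init x) (fun x' => Fin.snoc x' true)
    · intro x hx
      simp only [mem_filter, mem_univ, true_and]
      have hx' := Finset.mem_filter.1 hx
      have : Fin.snoc (Fin.init x) (x (Fin.last m)) = x := Fin.snoc_init_self x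
      rw [hx'.2] at this
      rw [this]; exact hx'.1
    · intro x' hx'
      simp only [mem_filter, mem_univ, true_and] at hx' ⊢
      exact ⟨hx', by simp⟩
    · intro x hx
      have hx' := Finset.mem_filter.1 hx
      have : Fin.snoc (Fin.init x) (x (Fin.last m)) = x := Fin.snoc_init_self x
      rw [hx'.2] at this; exact this
    · intro x' _; exact Fin.init_snoc _ _
    · intro x hx
      have hx' := Finset.mem_filter.1 hx
      have : Fin.snoc (Fin.init x) (x (Fin.last m)) = x := Fin.snoc_init_self x
      rw [hx'.2] at this
      rw [this]

set_option maxHeartbeats 1000000 in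
/-- **Decomposition of the restricted Dirichlet form along the last coordinate.**
Let `A ⊆ {0,1}^{m+1}` be a nonempty monotone set whose bottom slice `A_0` is
nonempty. Then for every `f : A → ℝ`,
`𝓔_A(f) = (a₁/(2a))·𝓔_{A₁}(f₁) + (a₀/(2a))·𝓔_{A₀}(f₀)
  + (a₀/(4a))·E_{x'∼A₀}[(f₀(x') − f₁(x'))²]`. -/
theorem dirichlet_decomposition {m : ℕ} (A : Finset (Fin (m + 1) → Bool))
    (hA : A.Nonempty) (hmono : ∀ x ∈ A, ∀ y, x ≤ y → y ∈ A)
    (A0 A1 : Finset (Fin m → Bool))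
    (hA0 : A0 = Finset.univ.filter fun x' => Fin.snoc x' false ∈ A)
    (hA1 : A1 = Finset.univ.filter fun x' => Fin.snoc x' true ∈ A)
    (hA0ne : A0.Nonempty)
    (a a0 a1 : ℝ)
    (ha : a = (A.card : ℝ) / 2 ^ (m + 1))
    (ha0 : a0 = (A0.card : ℝ) / 2 ^ m)
    (ha1 : a1 = (A1.card : ℝ) / 2 ^ m)
    (f : (Fin (m + 1) → Bool) → ℝ) :
    cubeDirichlet A f =
      (a1 / (2 * a)) * cubeDirichlet A1 (fun x' => f (Fin.snoc x' true)) +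
      (a0 / (2 * a)) * cubeDirichlet A0 (fun x' => f (Fin.snoc x' false)) +
      (a0 / (4 * a)) *
        cubeExpect A0 (fun x' => (f (Fin.snoc x' false) - f (Fin.snoc x' true)) ^ 2) := by
  have hm0 : ∀ x', x' ∈ A0 ↔ Fin.snoc x' false ∈ A := by simp [hA0]
  have hm1 : ∀ x', x' ∈ A1 ↔ Fin.snoc x' true ∈ A := by simp [hA1]
  have hsub : ∀ x' : Fin m → Bool, Fin.snoc x' false ∈ A → Fin.snoc x' true ∈ A := by
    intro x' h
    refine hmono _ h _ ?_
    intro i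
    refine Fin.lastCases ?_ ?_ i
    · simp [Fin.snoc_last]
    · intro j; simp [Fin.snoc_castSucc]
  have hsubA : A0 ⊆ A1 := by
    intro x' hx'
    exact (hm1 x').2 (hsub x' ((hm0 x').1 hx'))
  have hcard : (A.card : ℝ) = (A0.card : ℝ) + (A1.card : ℝ) := by
    have := sum_snoc_split A (fun _ => (1 : ℝ))
    simpa [Finset.sum_const, ← hA0, ← hA1] using this
  have hA1ne : A1.Nonempty := hA0ne.mono hsubA
  have hN : (0 : ℝ) < A.card := by exact_mod_cast Finset.card_pos.2 hA
  have hN0 : (0 : ℝ) < A0.card := by exact_mod_cast Finset.card_pos.2 hA0ne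
  have hN1 : (0 : ℝ) < A1.card := by exact_mod_cast Finset.card_pos.2 hA1ne
  -- the last-coordinate sum
  have hlast : (∑ x ∈ A, (f x - f (Function.update x (Fin.last m) (!(x (Fin.last m))))) ^ 2 *
      (if Function.update x (Fin.last m) (!(x (Fin.last m))) ∈ A then (1:ℝ) else 0))
      = 2 * ∑ x' ∈ A0, (f (Fin.snoc x' false) - f (Fin.snoc x' true)) ^ 2 := by
    rw [sum_snoc_split, ← hA0, ← hA1]
    simp only [Fin.snoc_last, Bool.not_false, Bool.not_true, Fin.update_snoc_last]
    have e0 : ∑ x' ∈ A0, (f (Fin.snoc x' false) - f (Fin.snoc x' true)) ^ 2 *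
        (if Fin.snoc x' true ∈ A then (1:ℝ) else 0)
        = ∑ x' ∈ A0, (f (Fin.snoc x' false) - f (Fin.snoc x' true)) ^ 2 :=
      Finset.sum_congr rfl (fun x' hx' => by
        rw [if_pos (hsub x' ((hm0 x').1 hx')), mul_one])
    have e1 : ∑ x' ∈ A1, (f (Fin.snoc x' true) - f (Fin.snoc x' false)) ^ 2 *
        (if Fin.snoc x' false ∈ A then (1:ℝ) else 0)
        = ∑ x' ∈ A0, (f (Fin.snoc x' false) - f (Fin.snoc x' true)) ^ 2 := by
      have step : ∀ x' ∈ A1, (f (Fin.snoc x' true) - f (Fin.snoc x' false)) ^ 2 *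
          (if Fin.snoc x' false ∈ A then (1:ℝ) else 0)
          = if x' ∈ A0 then (f (Fin.snoc x' false) - f (Fin.snoc x' true)) ^ 2 else 0 := by
        intro x' _
        simp only [← hm0]
        by_cases hx : x' ∈ A0
        · rw [if_pos hx, if_pos hx, mul_one]; ring
        · rw [if_neg hx, if_neg hx, mul_zero]
      rw [Finset.sum_congr rfl step, Finset.sum_ite_mem, Finset.inter_eq_right.2 hsubA]
    rw [e0, e1]; ring
  -- the castSucc-coordinate sums
  have hcs : ∀ j : Fin m, (∑ x ∈ A,
      (f x - f (Function.update x (Fin.castSucc j) (!(x (Fin.castSucc j))))) ^ 2 *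
      (if Function.update x (Fin.castSucc j) (!(x (Fin.castSucc j))) ∈ A then (1:ℝ) else 0))
      = (∑ x' ∈ A0, (f (Fin.snoc x' false) -
            f (Fin.snoc (Function.update x' j (!(x' j))) false)) ^ 2 *
          (if Function.update x' j (!(x' j)) ∈ A0 then (1:ℝ) else 0))
        + (∑ x' ∈ A1, (f (Fin.snoc x' true) -
            f (Fin.snoc (Function.update x' j (!(x' j))) true)) ^ 2 *
          (if Function.update x' j (!(x' j)) ∈ A1 then (1:ℝ) else 0)) := by
    intro j
    rw [sum_snoc_split, ← hA0, ← hA1]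
    congr 1
    · apply Finset.sum_congr rfl
      intro x' _
      simp only [Fin.snoc_castSucc, ← Fin.snoc_update, hm0]
    · apply Finset.sum_congr rfl
      intro x' _
      simp only [Fin.snoc_castSucc, ← Fin.snoc_update, hm1]
  -- unnormalized key identity
  have key : (∑ i : Fin (m+1), ∑ x ∈ A,
      (f x - f (Function.update x i (!(x i)))) ^ 2 *
      (if Function.update x i (!(x i)) ∈ A then (1:ℝ) else 0))
      = (∑ j : Fin m, ∑ x' ∈ A0, (f (Fin.snoc x' false) -
            f (Fin.snoc (Function.update x' j (!(x' j))) false)) ^ 2 *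
          (if Function.update x' j (!(x' j)) ∈ A0 then (1:ℝ) else 0))
        + (∑ j : Fin m, ∑ x' ∈ A1, (f (Fin.snoc x' true) -
            f (Fin.snoc (Function.update x' j (!(x' j))) true)) ^ 2 *
          (if Function.update x' j (!(x' j)) ∈ A1 then (1:ℝ) else 0))
        + 2 * ∑ x' ∈ A0, (f (Fin.snoc x' false) - f (Fin.snoc x' true)) ^ 2 := by
    rw [Fin.sum_univ_castSucc, hlast]
    rw [Finset.sum_congr rfl (fun j _ => hcs j), Finset.sum_add_distrib]
  -- express the Dirichlet forms as single quotients
  have hDA : cubeDirichlet A f = (1/4) * ((∑ i : Fin (m+1), ∑ x ∈ A,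
      (f x - f (Function.update x i (!(x i)))) ^ 2 *
      (if Function.update x i (!(x i)) ∈ A then (1:ℝ) else 0)) / (A.card : ℝ)) := by
    unfold cubeDirichlet cubeExpect
    rw [← Finset.sum_div]
  have hD0 : cubeDirichlet A0 (fun x' => f (Fin.snoc x' false))
      = (1/4) * ((∑ j : Fin m, ∑ x' ∈ A0, (f (Fin.snoc x' false) -
            f (Fin.snoc (Function.update x' j (!(x' j))) false)) ^ 2 *
          (if Function.update x' j (!(x' j)) ∈ A0 then (1:ℝ) else 0)) / (A0.card : ℝ)) := by
    unfold cubeDirichlet cubeExpect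
    rw [← Finset.sum_div]
  have hD1 : cubeDirichlet A1 (fun x' => f (Fin.snoc x' true))
      = (1/4) * ((∑ j : Fin m, ∑ x' ∈ A1, (f (Fin.snoc x' true) -
            f (Fin.snoc (Function.update x' j (!(x' j))) true)) ^ 2 *
          (if Function.update x' j (!(x' j)) ∈ A1 then (1:ℝ) else 0)) / (A1.card : ℝ)) := by
    unfold cubeDirichlet cubeExpect
    rw [← Finset.sum_div]
  have hE : cubeExpect A0 (fun x' => (f (Fin.snoc x' false) - f (Fin.snoc x' true)) ^ 2)
      = (∑ x' ∈ A0, (f (Fin.snoc x' false) - f (Fin.snoc x' true)) ^ 2) / (A0.card : ℝ) := rfl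
  rw [hDA, hD0, hD1, hE, key, ha, ha0, ha1, hcard]
  have h2m : (2:ℝ) ^ m ≠ 0 := by positivity
  have hN0' : (A0.card : ℝ) ≠ 0 := ne_of_gt hN0
  have hN1' : (A1.card : ℝ) ≠ 0 := ne_of_gt hN1
  have hNA' : (A0.card : ℝ) + (A1.card : ℝ) ≠ 0 := by positivity
  field_simp
  ring
end

section
/- Positive semidefiniteness inequality for the coupling matrix. For all real numbers a_0, a_1 with 0 ≤ a_0 ≤ a_1 ≤ 1, setting a := (a_0 + a_1)/2, one has (√(1 − a) − √(1 − a_0) + 1) · (√(1 − a) − √(1 − a_1) + 1) ≥ 1. Consequently the symmetric 2×2 matrix with diagonal entries a_0·(√(1−a) − √(1−a_0) + 1)/2 and a_0·(√(1−a) − √(1−a_1) + 1)/2 and off-diagonal entries a_0/2 is positive semidefinite. -/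
open Real

/-
With `x₀ = √(1 - a₀)`, `x = √(1 - a)`, `x₁ = √(1 - a₁)` one has `2x² = x₀² + x₁²`, and under this
constraint the product is `1 + (2x - x₀ - x₁)(2 - x₀ - x₁)/2`. Both factors are nonnegative:
`x₀, x₁ ≤ 1`, and `x₀ + x₁ ≤ 2x` is the quadratic-mean/arithmetic-mean inequality. The matrix is
then positive semidefinite because its diagonal is nonnegative and its determinant is
`a₀²(product - 1)/4 ≥ 0`.
-/

theorem Matrix.posSemidef_of_sq_le_mul {𝕜 : Type*} [Field 𝕜] [LinearOrder 𝕜] [IsStrictOrderedRing 𝕜]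
    [StarRing 𝕜] [TrivialStar 𝕜] {A B C : 𝕜} (hA : 0 ≤ A) (hC : 0 ≤ C) (hdet : B ^ 2 ≤ A * C) :
    Matrix.PosSemidef !![A, B; B, C] := by
  refine Matrix.PosSemidef.of_dotProduct_mulVec_nonneg ?_ fun v => ?_
  · ext i j
    fin_cases i <;> fin_cases j <;> simp
  have hquad : dotProduct (star v) (mulVec !![A, B; B, C] v) =
      A * v 0 ^ 2 + 2 * B * (v 0 * v 1) + C * v 1 ^ 2 := by
    simp only [dotProduct, Pi.star_apply, star_trivial, mulVec, of_apply, cons_val',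
      cons_val_fin_one, Fin.sum_univ_two, Fin.isValue, cons_val_zero, cons_val_one]
    ring
  rw [hquad]
  rcases hA.eq_or_lt with hA0 | hApos
  · have hB : B = 0 := by nlinarith [sq_nonneg B]
    subst hA0 hB
    nlinarith [sq_nonneg (v 1)]
  · -- `A · Q(v) = (A v₀ + B v₁)² + (AC - B²) v₁²`
    nlinarith [sq_nonneg (A * v 0 + B * v 1), mul_nonneg (sub_nonneg.2 hdet) (sq_nonneg (v 1))]

section CouplingProduct

variable {x x₀ x₁ : ℝ}

theorem add_le_two_mul_of_two_mul_sq_eq (hx : 0 ≤ x) (h : 2 * x ^ 2 = x₀ ^ 2 + x₁ ^ 2) :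
    x₀ + x₁ ≤ 2 * x :=
  abs_le_of_sq_le_sq' (by nlinarith [sq_nonneg (x₀ - x₁)]) (by positivity) |>.2

theorem coupling_product_eq (h : 2 * x ^ 2 = x₀ ^ 2 + x₁ ^ 2) :
    (x - x₀ + 1) * (x - x₁ + 1) = 1 + (2 * x - x₀ - x₁) * (2 - x₀ - x₁) / 2 := by
  linear_combination h / 2

theorem one_le_coupling_product (hx : 0 ≤ x) (hx₀ : x₀ ≤ 1) (hx₁ : x₁ ≤ 1)
    (h : 2 * x ^ 2 = x₀ ^ 2 + x₁ ^ 2) : 1 ≤ (x - x₀ + 1) * (x - x₁ + 1) := by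
  rw [coupling_product_eq h, le_add_iff_nonneg_right]
  have hmean := add_le_two_mul_of_two_mul_sq_eq hx h
  exact div_nonneg (mul_nonneg (by linarith) (by linarith)) zero_le_two

end CouplingProduct

/-- **Positive semidefiniteness inequality for the coupling matrix.**
For `0 ≤ a₀ ≤ a₁ ≤ 1` and `a := (a₀ + a₁)/2`, one has
`(√(1−a) − √(1−a₀) + 1)·(√(1−a) − √(1−a₁) + 1) ≥ 1`; consequently the
symmetric 2×2 matrix with diagonal entries `a₀·(√(1−a) − √(1−a₀) + 1)/2` and
`a₀·(√(1−a) − √(1−a₁) + 1)/2` and off-diagonal entries `a₀/2` is positive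
semidefinite. -/
theorem coupling_matrix_posSemidef (a0 a1 : ℝ) (h0 : 0 ≤ a0) (h01 : a0 ≤ a1)
    (h1 : a1 ≤ 1) (a : ℝ) (ha : a = (a0 + a1) / 2) :
    (Real.sqrt (1 - a) - Real.sqrt (1 - a0) + 1) *
        (Real.sqrt (1 - a) - Real.sqrt (1 - a1) + 1) ≥ 1 ∧
    Matrix.PosSemidef
      !![a0 * (Real.sqrt (1 - a) - Real.sqrt (1 - a0) + 1) / 2, a0 / 2;
         a0 / 2, a0 * (Real.sqrt (1 - a) - Real.sqrt (1 - a1) + 1) / 2] := by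
  have hx₀ : √(1 - a0) ≤ 1 := Real.sqrt_le_one.2 (by linarith)
  have hx₁ : √(1 - a1) ≤ 1 := Real.sqrt_le_one.2 (by linarith)
  have hx : 0 ≤ √(1 - a) := Real.sqrt_nonneg _
  have hsq : 2 * √(1 - a) ^ 2 = √(1 - a0) ^ 2 + √(1 - a1) ^ 2 := by
    rw [Real.sq_sqrt (by linarith), Real.sq_sqrt (by linarith), Real.sq_sqrt (by linarith), ha]
    ring
  have hprod := one_le_coupling_product hx hx₀ hx₁ hsq
  refine ⟨hprod, Matrix.posSemidef_of_sq_le_mul ?_ ?_ ?_⟩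
  · exact div_nonneg (mul_nonneg h0 (by linarith)) zero_le_two
  · exact div_nonneg (mul_nonneg h0 (by linarith)) zero_le_two
  · nlinarith [mul_le_mul_of_nonneg_left hprod (sq_nonneg a0)]
end

section
/- Key functional inequality for the inductive step (with constant c = 1/2). Let n ≥ 1 and let A ⊆ {0,1}^n be a nonempty monotone set whose bottom slice A_0 is nonempty. Then for every f : A → ℝ, writing μ_1 := E_{x'∼A_1}[f_1(x')] and μ_0 := E_{x'∼A_0}[f_0(x')], one has (1/2)·a_1·(√(1−a) − √(1−a_1))·Var_{A_1}[f_1] + (1/2)·a_0·(√(1−a) − √(1−a_0))·Var_{A_0}[f_0] + (a_0/2)·E_{x'∼A_0}[(f_0(x') − f_1(x'))²] ≥ (1/2)·(a_1·a_0/(a_0 + a_1))·(1 − √(1−a))·(μ_1 − μ_0)². -/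
/-- Variance of `g` under the uniform measure on `B`. -/
noncomputable def cubeVar {m : ℕ} (B : Finset (Fin m → Bool))
    (g : (Fin m → Bool) → ℝ) : ℝ :=
  cubeExpect B (fun x => (g x - cubeExpect B g) ^ 2)

/-!
Write `ν = E_{A₀}[f₁]`, `t = ν − μ₁` and `r = μ₀ − ν`, so that `μ₀ − μ₁ = t + r`. Cauchy–Schwarz
on `A₁ \ A₀`, where `f₁ − μ₁` sums to `−|A₀| t`, bounds `Var_{A₁} f₁` below by the second moment of
`f₁ − μ₁` on `A₀` plus a multiple of `t²`. The two-term inequality `l (x + y)² ≤ p x² + y²`, valid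
as soon as `l (1 + p) ≤ p`, is then used twice: pointwise, to absorb
`Var_{A₀} f₀ = Var_{A₀} (f₁ + (f₀ − f₁))` into `Var_{A₀} f₁` and `Var_{A₀} (f₀ − f₁)`, and to bound
`(t + r)²` by the `t²` and `r²` terms left over. Both side conditions are elementary inequalities
between `√(1 − a₀) ≥ √(1 − a) ≥ √(1 − a₁)`, whose squares are in arithmetic progression.
-/

open Finset
open scoped BigOperators

section Slices

variable {m : ℕ} {β : Type*} [Fintype β] [DecidableEq β]

theorem card_eq_sum_card_filter_snoc_mem (A : Finset (Fin (m + 1) → β)) :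
    #A = ∑ b, #(univ.filter fun x' : Fin m → β => Fin.snoc x' b ∈ A) := by
  calc #A = ∑ x, if x ∈ A then 1 else 0 := by simp
    _ = ∑ p : β × (Fin m → β), if Fin.snoc p.2 p.1 ∈ A then 1 else 0 :=
      (Fintype.sum_equiv (Fin.snocEquiv fun _ => β) _ _ fun _ => rfl).symm
    _ = _ := by simp only [Fintype.sum_prod_type, card_filter]

theorem filter_snoc_mem_subset_of_le [Preorder β] {A : Finset (Fin (m + 1) → β)}
    (hA : IsUpperSet (A : Set (Fin (m + 1) → β))) {b b' : β} (hb : b ≤ b') :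
    (univ.filter fun x' : Fin m → β => Fin.snoc x' b ∈ A) ⊆
      univ.filter fun x' => Fin.snoc x' b' ∈ A := fun x' hx' =>
  mem_filter.2 ⟨mem_univ _, hA ((Fin.snocOrderIso fun _ => β).monotone
    (show (b, x') ≤ (b', x') from ⟨hb, le_rfl⟩)) (mem_filter.1 hx').2⟩

end Slices

theorem mul_add_sq_le_of_mul_one_add_le {l p : ℝ} (hp : 0 ≤ p) (h : l * (1 + p) ≤ p) (x y : ℝ) :
    l * (x + y) ^ 2 ≤ p * x ^ 2 + y ^ 2 := by
  have hpos : 0 < 1 + p := by linarith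
  refine le_of_mul_le_mul_right ?_ hpos
  nlinarith [sq_nonneg (p * x - y), mul_le_mul_of_nonneg_right h (sq_nonneg (x + y))]

section Expectation

variable {m : ℕ} (B : Finset (Fin m → Bool)) (g h : (Fin m → Bool) → ℝ)

theorem cubeExpect_eq_expect : cubeExpect B g = 𝔼 x ∈ B, g x :=
  (expect_eq_sum_div_card B g).symm

theorem cubeVar_eq_expect : cubeVar B g = 𝔼 x ∈ B, (g x - 𝔼 y ∈ B, g y) ^ 2 := by
  simp only [cubeVar, cubeExpect_eq_expect]

theorem cubeExpect_sub : cubeExpect B (fun x => g x - h x) = cubeExpect B g - cubeExpect B h := by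
  simp only [cubeExpect_eq_expect, expect_sub_distrib]

theorem cubeVar_nonneg : 0 ≤ cubeVar B g := by
  rw [cubeVar_eq_expect]
  exact expect_nonneg fun _ _ => sq_nonneg _

theorem cubeExpect_sub_sq (hB : B.Nonempty) (c : ℝ) :
    cubeExpect B (fun x => (g x - c) ^ 2) = cubeVar B g + (cubeExpect B g - c) ^ 2 := by
  simp only [cubeVar_eq_expect, cubeExpect_eq_expect]
  set μ := 𝔼 x ∈ B, g x
  have hcenter : 𝔼 x ∈ B, (g x - μ) = 0 := by rw [expect_sub_distrib, expect_const hB, sub_self]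
  calc 𝔼 x ∈ B, (g x - c) ^ 2
      = 𝔼 x ∈ B, ((g x - μ) ^ 2 + 2 * (μ - c) * (g x - μ) + (μ - c) ^ 2) := by
        congr! 2 with x; ring
    _ = _ := by
      rw [expect_add_distrib, expect_add_distrib, ← mul_expect, hcenter, expect_const hB]
      ring

theorem mul_cubeVar_add_le {α β : ℝ} (hα : 0 ≤ α) (hαβ : β * (1 + α) ≤ α) :
    β * cubeVar B (fun x => g x + h x) ≤ α * cubeVar B g + cubeVar B h := by
  have hpointwise : ∀ x ∈ B, β * (g x + h x - (𝔼 y ∈ B, g y + 𝔼 y ∈ B, h y)) ^ 2 ≤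
      α * (g x - 𝔼 y ∈ B, g y) ^ 2 + (h x - 𝔼 y ∈ B, h y) ^ 2 := fun x _ => by
    convert mul_add_sq_le_of_mul_one_add_le hα hαβ (g x - 𝔼 y ∈ B, g y) (h x - 𝔼 y ∈ B, h y)
      using 2
    ring
  simpa only [cubeVar_eq_expect, expect_add_distrib, mul_expect] using expect_le_expect hpointwise

theorem card_mul_cubeVar_add_le {B₀ B₁ : Finset (Fin m → Bool)} (hsub : B₀ ⊆ B₁)
    (hB₀ : B₀.Nonempty) :
    #B₀ * (#B₁ - #B₀) * cubeVar B₀ g + #B₀ * #B₁ * (cubeExpect B₀ g - cubeExpect B₁ g) ^ 2 ≤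
      #B₁ * (#B₁ - #B₀) * cubeVar B₁ g := by
  have hmoment := cubeExpect_sub_sq B₀ g hB₀ (cubeExpect B₁ g)
  simp only [cubeVar_eq_expect, cubeExpect_eq_expect] at hmoment ⊢
  have hsum : ∀ B : Finset _,
      ∑ x ∈ B, (g x - 𝔼 y ∈ B₁, g y) = #B * (𝔼 x ∈ B, g x - 𝔼 y ∈ B₁, g y) := by
    intro B
    rw [sum_sub_distrib, sum_const, nsmul_eq_mul, mul_sub, card_mul_expect]
  have hdiff := sum_sdiff (f := fun x => g x - 𝔼 y ∈ B₁, g y) hsub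
  have hdiff_sq := sum_sdiff (f := fun x => (g x - 𝔼 y ∈ B₁, g y) ^ 2) hsub
  rw [hsum B₀, hsum B₁, sub_self, mul_zero, ← eq_neg_iff_add_eq_zero] at hdiff
  have hcs := sq_sum_le_card_mul_sum_sq (s := B₁ \ B₀) (f := fun x => g x - 𝔼 y ∈ B₁, g y)
  rw [card_sdiff_of_subset hsub, Nat.cast_sub (card_le_card hsub), hdiff, neg_sq,
    eq_sub_of_add_eq hdiff_sq, ← card_mul_expect, ← card_mul_expect, hmoment] at hcs
  linarith

end Expectation

theorem sub_mul_one_add_sub_le {s s₀ s₁ : ℝ} (hmid : 2 * s ^ 2 = s₀ ^ 2 + s₁ ^ 2) (h₁ : 0 ≤ s₁)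
    (h₁s : s₁ ≤ s) (hs₀ : s ≤ s₀) (h₀ : s₀ ≤ 1) : (s₀ - s) * (1 + (s - s₁)) ≤ s - s₁ := by
  have hchord : (s - s₁) * (s + s₁) ≤ s₀ - s₁ := by
    nlinarith [mul_nonneg (sub_nonneg.2 (h₁s.trans hs₀)) (by linarith : (0:ℝ) ≤ 2 - s₀ - s₁)]
  rcases (add_nonneg (h₁.trans (h₁s.trans hs₀)) (h₁.trans h₁s)).eq_or_lt with h0 | hpos
  · nlinarith
  refine le_of_mul_le_mul_right ?_ hpos
  nlinarith [mul_le_mul_of_nonneg_left hchord (sub_nonneg.2 h₁s)]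

theorem div_mul_one_sub_mul_one_add_div_le {a₀ a₁ s s₁ : ℝ} (hsum : 0 < a₀ + a₁) (ha₁ : 0 ≤ a₁)
    (hs : s ^ 2 = 1 - (a₀ + a₁) / 2) (hs₁ : s₁ ^ 2 = 1 - a₁) (h₁ : 0 ≤ s₁) (hpos : 0 < s) :
    a₁ / (a₀ + a₁) * (1 - s) * (1 + a₁ / (2 * (s + s₁))) ≤ a₁ / (2 * (s + s₁)) := by
  have hs1 : s ≤ 1 := by nlinarith
  have hbound : (1 - s) * (2 * (s + s₁) + a₁) ≤ a₀ + a₁ := by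
    nlinarith [mul_nonneg (sub_nonneg.2 hs1) (sq_nonneg (1 - s₁))]
  have hsplit : a₁ / (a₀ + a₁) * (1 - s) * (1 + a₁ / (2 * (s + s₁))) =
      a₁ / (2 * (s + s₁)) * ((1 - s) * (2 * (s + s₁) + a₁) / (a₀ + a₁)) := by
    have : s + s₁ ≠ 0 := by positivity
    field_simp
  rw [hsplit]
  exact mul_le_of_le_one_right (by positivity) ((div_le_one hsum).2 hbound)

theorem key_inequality_of_ssubset {m : ℕ} {B₀ B₁ : Finset (Fin m → Bool)} (hssub : B₀ ⊂ B₁)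
    (hB₀ : B₀.Nonempty) (g₀ g₁ : (Fin m → Bool) → ℝ) {N a a₀ a₁ : ℝ} (hN : (#B₁ : ℝ) ≤ N)
    (ha₀ : a₀ = #B₀ / N) (ha₁ : a₁ = #B₁ / N) (ha : a = (a₀ + a₁) / 2) :
    (1 / 2) * a₁ * (√(1 - a) - √(1 - a₁)) * cubeVar B₁ g₁ +
        (1 / 2) * a₀ * (√(1 - a) - √(1 - a₀)) * cubeVar B₀ g₀ +
        (a₀ / 2) * cubeExpect B₀ (fun x => (g₀ x - g₁ x) ^ 2) ≥
      (1 / 2) * (a₁ * a₀ / (a₀ + a₁)) * (1 - √(1 - a)) *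
        (cubeExpect B₁ g₁ - cubeExpect B₀ g₀) ^ 2 := by
  have hcard₀ : (0 : ℝ) < #B₀ := by exact_mod_cast hB₀.card_pos
  have hcard₀₁ : (#B₀ : ℝ) < #B₁ := by exact_mod_cast card_lt_card hssub
  have hNpos : 0 < N := hcard₀.trans (hcard₀₁.trans_le hN)
  have ha₀pos : 0 < a₀ := ha₀ ▸ div_pos hcard₀ hNpos
  have ha₀₁ : a₀ < a₁ := ha₀ ▸ ha₁ ▸ div_lt_div_of_pos_right hcard₀₁ hNpos
  have ha₁le : a₁ ≤ 1 := ha₁ ▸ (div_le_one hNpos).2 hN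
  set s := √(1 - a)
  set s₀ := √(1 - a₀)
  set s₁ := √(1 - a₁)
  have hs : s ^ 2 = 1 - a := Real.sq_sqrt (by linarith)
  have hs₀ : s₀ ^ 2 = 1 - a₀ := Real.sq_sqrt (by linarith)
  have hs₁ : s₁ ^ 2 = 1 - a₁ := Real.sq_sqrt (by linarith)
  have hs₁s : s₁ ≤ s := Real.sqrt_le_sqrt (by linarith)
  have hss₀ : s ≤ s₀ := Real.sqrt_le_sqrt (by linarith)
  have hs₀le : s₀ ≤ 1 := Real.sqrt_le_one.2 (by linarith)
  have hspos : 0 < s := Real.sqrt_pos.2 (by linarith)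
  have hgap : (s - s₁) * (2 * (s + s₁)) = a₁ - a₀ := by
    linear_combination 2 * hs - 2 * hs₁ - 2 * ha
  set μ₀ := cubeExpect B₀ g₀
  set μ₁ := cubeExpect B₁ g₁
  set ν := cubeExpect B₀ g₁
  have hV₀ : (s₀ - s) * cubeVar B₀ g₀ ≤
      (s - s₁) * cubeVar B₀ g₁ + cubeVar B₀ (fun x => g₀ x - g₁ x) := by
    have hmid : 2 * s ^ 2 = s₀ ^ 2 + s₁ ^ 2 := by linear_combination 2 * hs - hs₀ - hs₁ - 2 * ha
    simpa only [add_sub_cancel] using mul_cubeVar_add_le B₀ g₁ (fun x => g₀ x - g₁ x)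
      (sub_nonneg.2 hs₁s) (sub_mul_one_add_sub_le hmid (Real.sqrt_nonneg _) hs₁s hss₀ hs₀le)
  -- `p` is the coefficient of `(ν - μ₁)²` that `Var_{B₁} g₁` supplies, `l` the one needed on
  -- `(μ₀ - μ₁)² = ((ν - μ₁) + (μ₀ - ν))²`.
  set p := a₁ / (2 * (s + s₁))
  set l := a₁ / (a₀ + a₁) * (1 - s)
  have hV₁ : a₀ * (s - s₁) * cubeVar B₀ g₁ + a₀ * p * (ν - μ₁) ^ 2 ≤
      a₁ * (s - s₁) * cubeVar B₁ g₁ := by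
    have hrestrict := card_mul_cubeVar_add_le g₁ hssub.subset hB₀
    rw [← (eq_div_iff hNpos.ne').1 ha₀, ← (eq_div_iff hNpos.ne').1 ha₁] at hrestrict
    have hp : 2 * (s + s₁) * p = a₁ := mul_div_cancel₀ _ (by positivity)
    refine le_of_mul_le_mul_left ?_ (by positivity : 0 < N ^ 2 * (2 * (s + s₁)))
    linear_combination hrestrict + N ^ 2 * ((a₀ * cubeVar B₀ g₁) * hgap +
      (a₀ * (ν - μ₁) ^ 2) * hp - (a₁ * cubeVar B₁ g₁) * hgap)
  have hlp : l * (1 + p) ≤ p :=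
    div_mul_one_sub_mul_one_add_div_le (by linarith) (by linarith) (by linear_combination hs - ha)
      hs₁ (Real.sqrt_nonneg _) hspos
  have hmean := mul_add_sq_le_of_mul_one_add_le (div_nonneg (by linarith) (by positivity)) hlp
    (ν - μ₁) (μ₀ - ν)
  have hRHS : a₁ * a₀ / (a₀ + a₁) * (1 - s) * (μ₁ - μ₀) ^ 2 =
      a₀ * (l * (ν - μ₁ + (μ₀ - ν)) ^ 2) := by
    ring
  have hD : cubeExpect B₀ (fun x => (g₀ x - g₁ x) ^ 2) =
      cubeVar B₀ (fun x => g₀ x - g₁ x) + (μ₀ - ν) ^ 2 := by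
    simpa [cubeExpect_sub] using cubeExpect_sub_sq B₀ (fun x => g₀ x - g₁ x) hB₀ 0
  rw [hD]
  linarith [mul_le_mul_of_nonneg_left hV₀ ha₀pos.le, mul_le_mul_of_nonneg_left hmean ha₀pos.le]

theorem key_inequality_of_subset {m : ℕ} {B₀ B₁ : Finset (Fin m → Bool)} (hsub : B₀ ⊆ B₁)
    (hB₀ : B₀.Nonempty) (g₀ g₁ : (Fin m → Bool) → ℝ) {N a a₀ a₁ : ℝ} (hN : (#B₁ : ℝ) ≤ N)
    (ha₀ : a₀ = #B₀ / N) (ha₁ : a₁ = #B₁ / N) (ha : a = (a₀ + a₁) / 2) :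
    (1 / 2) * a₁ * (√(1 - a) - √(1 - a₁)) * cubeVar B₁ g₁ +
        (1 / 2) * a₀ * (√(1 - a) - √(1 - a₀)) * cubeVar B₀ g₀ +
        (a₀ / 2) * cubeExpect B₀ (fun x => (g₀ x - g₁ x) ^ 2) ≥
      (1 / 2) * (a₁ * a₀ / (a₀ + a₁)) * (1 - √(1 - a)) *
        (cubeExpect B₁ g₁ - cubeExpect B₀ g₀) ^ 2 := by
  rcases hsub.eq_or_ssubset with rfl | hssub
  · obtain rfl : a₀ = a₁ := ha₀.trans ha₁.symm
    obtain rfl : a = a₀ := by linarith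
    have hcard : (0 : ℝ) < #B₀ := by exact_mod_cast hB₀.card_pos
    have hapos : 0 < a := ha₀ ▸ div_pos hcard (hcard.trans_le hN)
    have hcoef : a * a / (a + a) = a / 2 := by field_simp; ring
    have hD := cubeExpect_sub_sq B₀ (fun x => g₀ x - g₁ x) hB₀ 0
    simp only [sub_zero, cubeExpect_sub] at hD
    rw [sub_self, hcoef, hD]
    nlinarith [mul_nonneg hapos.le (cubeVar_nonneg B₀ fun x => g₀ x - g₁ x),
      mul_nonneg (mul_nonneg hapos.le (sq_nonneg (cubeExpect B₀ g₀ - cubeExpect B₀ g₁)))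
        (Real.sqrt_nonneg (1 - a))]
  · exact key_inequality_of_ssubset hssub hB₀ g₀ g₁ hN ha₀ ha₁ ha

theorem key_inductive_inequality_general {m : ℕ} (A : Finset (Fin (m + 1) → Bool))
    (hmono : ∀ x ∈ A, ∀ y, x ≤ y → y ∈ A)
    (A0 A1 : Finset (Fin m → Bool))
    (hA0 : A0 = Finset.univ.filter fun x' => Fin.snoc x' false ∈ A)
    (hA1 : A1 = Finset.univ.filter fun x' => Fin.snoc x' true ∈ A)
    (hA0ne : A0.Nonempty)
    (a a0 a1 : ℝ)
    (ha : a = (A.card : ℝ) / 2 ^ (m + 1))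
    (ha0 : a0 = (A0.card : ℝ) / 2 ^ m)
    (ha1 : a1 = (A1.card : ℝ) / 2 ^ m)
    (f : (Fin (m + 1) → Bool) → ℝ)
    (μ0 μ1 : ℝ)
    (hμ0 : μ0 = cubeExpect A0 (fun x' => f (Fin.snoc x' false)))
    (hμ1 : μ1 = cubeExpect A1 (fun x' => f (Fin.snoc x' true))) :
    (1 / 2) * a1 * (Real.sqrt (1 - a) - Real.sqrt (1 - a1)) *
        cubeVar A1 (fun x' => f (Fin.snoc x' true)) +
      (1 / 2) * a0 * (Real.sqrt (1 - a) - Real.sqrt (1 - a0)) *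
        cubeVar A0 (fun x' => f (Fin.snoc x' false)) +
      (a0 / 2) *
        cubeExpect A0 (fun x' => (f (Fin.snoc x' false) - f (Fin.snoc x' true)) ^ 2) ≥
    (1 / 2) * (a1 * a0 / (a0 + a1)) * (1 - Real.sqrt (1 - a)) * (μ1 - μ0) ^ 2 := by
  have hsub : A0 ⊆ A1 := hA0 ▸ hA1 ▸
    filter_snoc_mem_subset_of_le (fun _ _ hxy hx => hmono _ hx _ hxy) (Bool.false_le true)
  have hmid : a = (a0 + a1) / 2 := by
    rw [ha, ha0, ha1, card_eq_sum_card_filter_snoc_mem A, Fintype.sum_bool, ← hA0, ← hA1]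
    push_cast
    ring
  have hcard : (#A1 : ℝ) ≤ 2 ^ m := by exact_mod_cast (card_le_univ A1).trans_eq (by simp)
  subst hμ0 hμ1
  exact key_inequality_of_subset hsub hA0ne _ _ hcard ha0 ha1 hmid

/-- **Key functional inequality for the inductive step (constant `c = 1/2`).**
Let `A ⊆ {0,1}^{m+1}` be a nonempty monotone set with nonempty bottom slice
`A₀`. Writing `μ₁ := E_{x'∼A₁}[f₁]` and `μ₀ := E_{x'∼A₀}[f₀]`, one has
`(1/2)·a₁·(√(1−a) − √(1−a₁))·Var_{A₁}[f₁]
 + (1/2)·a₀·(√(1−a) − √(1−a₀))·Var_{A₀}[f₀]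
 + (a₀/2)·E_{x'∼A₀}[(f₀(x') − f₁(x'))²]
 ≥ (1/2)·(a₁·a₀/(a₀+a₁))·(1 − √(1−a))·(μ₁ − μ₀)²`. -/
theorem key_inductive_inequality {m : ℕ} (A : Finset (Fin (m + 1) → Bool))
    (hA : A.Nonempty) (hmono : ∀ x ∈ A, ∀ y, x ≤ y → y ∈ A)
    (A0 A1 : Finset (Fin m → Bool))
    (hA0 : A0 = Finset.univ.filter fun x' => Fin.snoc x' false ∈ A)
    (hA1 : A1 = Finset.univ.filter fun x' => Fin.snoc x' true ∈ A)
    (hA0ne : A0.Nonempty)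
    (a a0 a1 : ℝ)
    (ha : a = (A.card : ℝ) / 2 ^ (m + 1))
    (ha0 : a0 = (A0.card : ℝ) / 2 ^ m)
    (ha1 : a1 = (A1.card : ℝ) / 2 ^ m)
    (f : (Fin (m + 1) → Bool) → ℝ)
    (μ0 μ1 : ℝ)
    (hμ0 : μ0 = cubeExpect A0 (fun x' => f (Fin.snoc x' false)))
    (hμ1 : μ1 = cubeExpect A1 (fun x' => f (Fin.snoc x' true))) :
    (1 / 2) * a1 * (Real.sqrt (1 - a) - Real.sqrt (1 - a1)) *
        cubeVar A1 (fun x' => f (Fin.snoc x' true)) +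
      (1 / 2) * a0 * (Real.sqrt (1 - a) - Real.sqrt (1 - a0)) *
        cubeVar A0 (fun x' => f (Fin.snoc x' false)) +
      (a0 / 2) *
        cubeExpect A0 (fun x' => (f (Fin.snoc x' false) - f (Fin.snoc x' true)) ^ 2) ≥
    (1 / 2) * (a1 * a0 / (a0 + a1)) * (1 - Real.sqrt (1 - a)) * (μ1 - μ0) ^ 2 :=
  key_inductive_inequality_general A hmono A0 A1 hA0 hA1 hA0ne a a0 a1 ha ha0 ha1 f μ0 μ1 hμ0 hμ1
end

section
/- Reduced three-parameter real inequality (with constant c = 1/2). For all real numbers a_0, a_1 with 0 ≤ a_0 ≤ a_1 ≤ 1 and a_0 + a_1 > 0, setting a := (a_0 + a_1)/2, and for all real numbers α, β, γ, one has (1/2)·(√(1−a) − √(1−a_1))·(a_1 − a_0)·(α − β)² + (a_1/2)·(γ − α)² ≥ (1/(2·(a_1 + a_0)))·(1 − √(1−a))·(a_1·(β − γ) + a_0·(α − β))². -/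
/-- **Reduced three-parameter real inequality (constant `c = 1/2`).**
For `0 ≤ a₀ ≤ a₁ ≤ 1` with `a₀ + a₁ > 0`, setting `a := (a₀ + a₁)/2`, and for
all real `α`, `β`, `γ`:
`(1/2)·(√(1−a) − √(1−a₁))·(a₁ − a₀)·(α − β)² + (a₁/2)·(γ − α)²
 ≥ (1/(2(a₁+a₀)))·(1 − √(1−a))·(a₁·(β − γ) + a₀·(α − β))²`. -/
theorem reduced_three_parameter_inequality (a0 a1 : ℝ) (h0 : 0 ≤ a0)
    (h01 : a0 ≤ a1) (h1 : a1 ≤ 1) (hpos : 0 < a0 + a1)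
    (a : ℝ) (ha : a = (a0 + a1) / 2) (α β γ : ℝ) :
    (1 / 2) * (Real.sqrt (1 - a) - Real.sqrt (1 - a1)) * (a1 - a0) * (α - β) ^ 2 +
      (a1 / 2) * (γ - α) ^ 2 ≥
    (1 / (2 * (a1 + a0))) * (1 - Real.sqrt (1 - a)) *
      (a1 * (β - γ) + a0 * (α - β)) ^ 2 := by
  have haa1 : a ≤ a1 := by rw [ha]; linarith
  have hapos : 0 < a := by rw [ha]; linarith
  have ha1 : a ≤ 1 := by rw [ha]; linarith
  have hs2 : Real.sqrt (1 - a) ^ 2 = 1 - a := Real.sq_sqrt (by linarith)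
  have ht2 : Real.sqrt (1 - a1) ^ 2 = 1 - a1 := Real.sq_sqrt (by linarith)
  have hts : Real.sqrt (1 - a1) ≤ Real.sqrt (1 - a) := Real.sqrt_le_sqrt (by linarith)
  have ht0 : 0 ≤ Real.sqrt (1 - a1) := Real.sqrt_nonneg _
  have hs0 : 0 ≤ Real.sqrt (1 - a) := Real.sqrt_nonneg _
  set s := Real.sqrt (1 - a) with hs_def
  set t := Real.sqrt (1 - a1) with ht_def
  have hs1 : s < 1 := by nlinarith
  have ht1 : t < 1 := by linarith
  have ha1t : a1 = 1 - t ^ 2 := by linarith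
  have ha0t : a0 = 1 - 2 * s ^ 2 + t ^ 2 := by
    have : s ^ 2 = 1 - (a0 + a1) / 2 := by rw [hs2, ha]
    linarith
  set A := α - β with hA
  set B := γ - α with hB
  have hc : (0:ℝ) < (1 - t ^ 2) * (1 + 2 * s + t ^ 2) := by nlinarith
  have hdet : (0:ℝ) ≤ (4 * (1 + s) * (s - t) ^ 2 * (s + t) * (1 - t ^ 2)) *
      ((1 - t) ^ 2 * A ^ 2) := by
    apply mul_nonneg
    · apply mul_nonneg
      apply mul_nonneg
      apply mul_nonneg
      · linarith
      · exact sq_nonneg _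
      · linarith
      · nlinarith
    · exact mul_nonneg (sq_nonneg _) (sq_nonneg _)
  -- key inequality: X^2 ≤ 4(1+s) * LHS
  have hF : (a1 * (β - γ) + a0 * (α - β)) ^ 2 ≤
      4 * (1 + s) * ((1 / 2) * (s - t) * (a1 - a0) * A ^ 2 + (a1 / 2) * B ^ 2) := by
    rw [ha1t, ha0t]
    have hid : ((1 - t ^ 2) * (1 + 2 * s + t ^ 2)) *
        (4 * (1 + s) * ((1 / 2) * (s - t) * ((1 - t ^ 2) - (1 - 2 * s ^ 2 + t ^ 2)) * A ^ 2
            + ((1 - t ^ 2) / 2) * B ^ 2)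
          - ((1 - t ^ 2) * (β - γ) + (1 - 2 * s ^ 2 + t ^ 2) * (α - β)) ^ 2)
        = (2 * (s ^ 2 - t ^ 2) * (1 - t ^ 2) * A - (1 - t ^ 2) * (1 + 2 * s + t ^ 2) * B) ^ 2
          + (4 * (1 + s) * (s - t) ^ 2 * (s + t) * (1 - t ^ 2)) * ((1 - t) ^ 2 * A ^ 2) := by
      rw [hA, hB]; ring
    have hnn : (0:ℝ) ≤ ((1 - t ^ 2) * (1 + 2 * s + t ^ 2)) *
        (4 * (1 + s) * ((1 / 2) * (s - t) * ((1 - t ^ 2) - (1 - 2 * s ^ 2 + t ^ 2)) * A ^ 2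
            + ((1 - t ^ 2) / 2) * B ^ 2)
          - ((1 - t ^ 2) * (β - γ) + (1 - 2 * s ^ 2 + t ^ 2) * (α - β)) ^ 2) := by
      rw [hid]; exact add_nonneg (sq_nonneg _) hdet
    have hD := (mul_nonneg_iff_of_pos_left hc).mp hnn
    linarith [hD]
  have hden : (0:ℝ) < 2 * (a1 + a0) := by linarith
  rw [ge_iff_le, show (1 / (2 * (a1 + a0))) * (1 - s) * (a1 * (β - γ) + a0 * (α - β)) ^ 2
      = ((1 - s) * (a1 * (β - γ) + a0 * (α - β)) ^ 2) / (2 * (a1 + a0)) from by ring,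
    div_le_iff₀ hden]
  have h1s : (0:ℝ) ≤ 1 - s := by linarith
  have hmul := mul_le_mul_of_nonneg_left hF h1s
  have hsum : a1 + a0 = 2 - 2 * s ^ 2 := by rw [ha1t, ha0t]; ring
  have heq : (1 - s) * (4 * (1 + s) *
      ((1 / 2) * (s - t) * (a1 - a0) * A ^ 2 + (a1 / 2) * B ^ 2))
      = ((1 / 2) * (s - t) * (a1 - a0) * A ^ 2 + (a1 / 2) * B ^ 2) * (2 * (a1 + a0)) := by
    rw [hsum]; ring
  linarith [hmul, heq]
end

section
/- Nonnegativity of the quadratic in T (with constant c = 1/2). For all real numbers a_0, a_1 with 0 ≤ a_0 ≤ a_1 ≤ 1, setting a := (a_0 + a_1)/2 and c := 1/2, for every real T one has c·(1 − √(1−a_1))·T² + 2·c·(√(1−a) + √(1−a_1))·a_1·T + a_1·(1 + √(1−a) − c·a_1)·(√(1−a) + √(1−a_1)) ≥ 0. -/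
/-- **Nonnegativity of the quadratic in `T` (constant `c = 1/2`).**
For `0 ≤ a₀ ≤ a₁ ≤ 1`, `a := (a₀ + a₁)/2`, `c := 1/2`, and every real `T`:
`c·(1 − √(1−a₁))·T² + 2·c·(√(1−a) + √(1−a₁))·a₁·T
 + a₁·(1 + √(1−a) − c·a₁)·(√(1−a) + √(1−a₁)) ≥ 0`. -/
theorem quadratic_in_T_nonneg (a0 a1 : ℝ) (h0 : 0 ≤ a0) (h01 : a0 ≤ a1)
    (h1 : a1 ≤ 1) (a c : ℝ) (ha : a = (a0 + a1) / 2) (hc : c = 1 / 2)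
    (T : ℝ) :
    c * (1 - Real.sqrt (1 - a1)) * T ^ 2 +
      2 * c * (Real.sqrt (1 - a) + Real.sqrt (1 - a1)) * a1 * T +
      a1 * (1 + Real.sqrt (1 - a) - c * a1) *
        (Real.sqrt (1 - a) + Real.sqrt (1 - a1)) ≥ 0 := by
  subst hc
  set s := Real.sqrt (1 - a) with hs
  set s1 := Real.sqrt (1 - a1) with hs1
  have ha1 : 0 ≤ a1 := le_trans h0 h01
  have haa : a ≤ a1 := by rw [ha]; linarith
  have ha0' : 0 ≤ a := by rw [ha]; linarith
  have hs2 : s ^ 2 = 1 - a := Real.sq_sqrt (by linarith)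
  have hs12 : s1 ^ 2 = 1 - a1 := Real.sq_sqrt (by linarith)
  have hs1nn : 0 ≤ s1 := Real.sqrt_nonneg _
  have hsnn : 0 ≤ s := Real.sqrt_nonneg _
  have hss : s1 ≤ s := Real.sqrt_le_sqrt (by linarith)
  have hsle : s ≤ 1 := by
    rw [hs]; exact Real.sqrt_le_one.mpr (by linarith)
  have hA : a1 = 1 - s1 ^ 2 := by linarith
  rw [hA]
  have hs1le : s1 ≤ 1 := le_trans hss hsle
  rcases eq_or_lt_of_le hs1le with h | h
  · rw [h]; norm_num
  · have hpos : (0:ℝ) < 2 * (1 - s1) := by linarith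
    have key : 0 ≤ (2 * (1 - s1)) *
        (1 / 2 * (1 - s1) * T ^ 2 + 2 * (1 / 2) * (s + s1) * (1 - s1 ^ 2) * T +
          (1 - s1 ^ 2) * (1 + s - 1 / 2 * (1 - s1 ^ 2)) * (s + s1)) := by
      nlinarith [sq_nonneg ((1 - s1) * T + (s + s1) * (1 - s1 ^ 2)),
        mul_nonneg (mul_nonneg (mul_nonneg (by nlinarith : (0:ℝ) ≤ 1 - s1 ^ 2)
          (by linarith : (0:ℝ) ≤ s + s1)) (by linarith : (0:ℝ) ≤ 1 + s))
          (sq_nonneg (1 - s1))]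
    exact (mul_nonneg_iff_of_pos_left hpos).mp key
end
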